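/- arXiv:1601.06023 — 3 statements merged into one kernel-verified Lean document; each statement's English description precedes it below -/
import Mathlib

section
/- Let K ≥ 1 and for each k = 1,…,K let a_k ≥ 0, b_k ≥ 0, c_k > 0, and let m3_k, m2_k > 0 satisfy m3_k ≥ (m2_k)^{3/2} and c_k = P_k² m2_k for some P_k > 0. Then (∑_{k=1}^K a_k P_k³ m3_k) / (∑_{k=1}^K b_k c_k)^{3/2} ≥ (1/(‖c‖₂ ‖b‖₂))^{3/2} ∑_{k=1}^K a_k c_k^{3/2}, where ‖·‖₂ denotes the Euclidean norm on ℝ^K. -/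
open Finset

/-- Lemma 3: lower bound on the Gaussian approximation scaling coefficient. -/
theorem stmt1 (K : ℕ) (hK : 1 ≤ K) (a b c P m2 m3 : Fin K → ℝ)
    (ha : ∀ k, 0 ≤ a k) (hb : ∀ k, 0 ≤ b k) (hc : ∀ k, 0 < c k)
    (hP : ∀ k, 0 < P k) (hm2 : ∀ k, 0 < m2 k) (hm3 : ∀ k, 0 < m3 k)
    (hmom : ∀ k, (m2 k) ^ ((3 : ℝ) / 2) ≤ m3 k)
    (hck : ∀ k, c k = (P k) ^ 2 * m2 k) :
    (1 / (Real.sqrt (∑ k, (c k) ^ 2) * Real.sqrt (∑ k, (b k) ^ 2))) ^ ((3 : ℝ) / 2)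
        * ∑ k, a k * (c k) ^ ((3 : ℝ) / 2)
      ≤ (∑ k, a k * (P k) ^ 3 * m3 k) / (∑ k, b k * c k) ^ ((3 : ℝ) / 2) := by
  have hNM : ∑ k, a k * (c k) ^ ((3:ℝ)/2) ≤ ∑ k, a k * (P k) ^ 3 * m3 k := by
    apply Finset.sum_le_sum
    intro k _
    have hpow : (c k) ^ ((3:ℝ)/2) = P k ^ 3 * (m2 k) ^ ((3:ℝ)/2) := by
      rw [hck k, Real.mul_rpow (by positivity) (hm2 k).le]
      congr 1
      rw [← Real.rpow_natCast (P k) 2, ← Real.rpow_mul (hP k).le,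
        ← Real.rpow_natCast (P k) 3]
      norm_num
    rw [hpow, ← mul_assoc]
    exact mul_le_mul_of_nonneg_left (hmom k) (mul_nonneg (ha k) (pow_nonneg (hP k).le 3))
  have hMnn : 0 ≤ ∑ k, a k * (P k) ^ 3 * m3 k := by
    apply Finset.sum_nonneg
    intro k _
    have := (hP k); have := (hm3 k); have := ha k; positivity
  by_cases hB : (∑ k, (b k) ^ 2) = 0
  · have hb0 : ∀ k ∈ Finset.univ, b k ^ 2 = 0 :=
      (Finset.sum_eq_zero_iff_of_nonneg (fun k _ => sq_nonneg (b k))).1 hB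
    have hS : (∑ k : Fin K, b k * c k) = 0 := by
      apply Finset.sum_eq_zero
      intro k hk
      have : b k = 0 := by
        have := hb0 k hk; exact pow_eq_zero_iff (n := 2) (by norm_num) |>.1 this
      simp [this]
    rw [hB, hS]
    simp [Real.zero_rpow (show ((3:ℝ)/2) ≠ 0 by norm_num)]
  · have hBsq : 0 < ∑ k, (b k) ^ 2 :=
      lt_of_le_of_ne (Finset.sum_nonneg fun k _ => sq_nonneg _) (Ne.symm hB)
    have hne : Nonempty (Fin K) := ⟨⟨0, hK⟩⟩
    have hCsq : 0 < ∑ k, (c k) ^ 2 := by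
      apply Finset.sum_pos (fun k _ => pow_pos (hc k) 2) Finset.univ_nonempty
    set C := Real.sqrt (∑ k, (c k) ^ 2) with hC
    set B := Real.sqrt (∑ k, (b k) ^ 2) with hBdef
    have hCpos : 0 < C := Real.sqrt_pos.2 hCsq
    have hBpos : 0 < B := Real.sqrt_pos.2 hBsq
    have hSpos : 0 < ∑ k : Fin K, b k * c k := by
      obtain ⟨k0, hk0⟩ : ∃ k, b k ≠ 0 := by
        by_contra h
        push_neg at h
        exact hB (by simp [h])
      apply Finset.sum_pos' (fun k _ => mul_nonneg (hb k) (hc k).le)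
      exact ⟨k0, Finset.mem_univ k0,
        mul_pos (lt_of_le_of_ne (hb k0) (Ne.symm hk0)) (hc k0)⟩
    have hCS : (∑ k : Fin K, b k * c k) ≤ C * B := by
      calc (∑ k : Fin K, b k * c k)
          ≤ Real.sqrt (∑ k, (b k)^2) * Real.sqrt (∑ k, (c k)^2) :=
            Real.sum_mul_le_sqrt_mul_sqrt _ _ _
        _ = C * B := mul_comm _ _
    have hrw : (1 / (C * B)) ^ ((3:ℝ)/2) = 1 / ((C * B) ^ ((3:ℝ)/2)) := by
      rw [one_div, Real.inv_rpow (by positivity), one_div]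
    rw [hrw, one_div, inv_mul_eq_div]
    apply div_le_div₀ hMnn hNM (Real.rpow_pos_of_pos hSpos _)
    exact Real.rpow_le_rpow hSpos.le hCS (by norm_num)
end

section
/- Let α > 2, ε ∈ (0, α), and let μ : [0,∞) → [0,∞) be measurable with μ(t) ≤ C t^{α−1−ε} for t ≥ B₁ (C, B₁ > 0 constants) and ∫₀^{B₁} μ(t) dt < ∞. Let q be a probability density on [0,∞) with finite first moment m_H = ∫₀^∞ h q(h) dh < ∞. Then for every s ≥ 0, P > 0, and every monotone non-increasing bounded G : [0,∞) → [0,∞) with G(t) ≤ β t^{−α} for t ≥ B₁, the double integral ∫₀^∞ ∫₀^∞ (1 − exp(−s P h G(t))) μ(t) q(h) dt dh is finite. -/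
open MeasureTheory

/-- Lemma 4: finiteness of the Laplace exponent of the downlink aggregate interference from
a single tier: ∫₀^∞ ∫₀^∞ (1 − exp(−sPhG(t))) μ(t) q(h) dt dh < ∞. -/
theorem stmt7 (α ε C B1 β s P : ℝ) (hα : 2 < α) (hε : 0 < ε) (hεα : ε < α)
    (hC : 0 < C) (hB1 : 0 < B1) (hβ : 0 < β) (hs : 0 ≤ s) (hP : 0 < P)
    (μ q G : ℝ → ℝ) (hμmeas : Measurable μ) (hμnn : ∀ t, 0 ≤ μ t)
    (hμbound : ∀ t, B1 ≤ t → μ t ≤ C * t ^ (α - 1 - ε))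
    (hμloc : IntegrableOn μ (Set.Icc 0 B1))
    (hqmeas : Measurable q) (hqnn : ∀ h, 0 ≤ q h)
    (hqdens : ∫ h in Set.Ici (0 : ℝ), q h = 1)
    (hmH : IntegrableOn (fun h => h * q h) (Set.Ici 0))
    (hGmeas : Measurable G) (hGnn : ∀ t, 0 ≤ G t)
    (hGmono : AntitoneOn G (Set.Ici 0))
    (MG : ℝ) (hGbd : ∀ t, 0 ≤ t → G t ≤ MG)
    (hGdecay : ∀ t, B1 ≤ t → G t ≤ β * t ^ (-α)) :
    IntegrableOn
      (fun p : ℝ × ℝ => (1 - Real.exp (-(s * P * p.2 * G p.1))) * μ p.1 * q p.2)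
      (Set.Ici 0 ×ˢ Set.Ici 0) := by
  -- Step 1: G * μ is integrable on [0, ∞)
  have hGμ : IntegrableOn (fun t => G t * μ t) (Set.Ici 0) := by
    have hsplit : Set.Icc (0:ℝ) B1 ∪ Set.Ici B1 = Set.Ici 0 :=
      Set.Icc_union_Ici_eq_Ici hB1.le
    rw [← hsplit]
    apply IntegrableOn.union
    · -- on [0, B1] : G t * μ t ≤ MG * μ t
      apply Integrable.mono' (hμloc.const_mul MG)
      · exact ((hGmeas.mul hμmeas).aestronglyMeasurable).restrict
      · filter_upwards [ae_restrict_mem measurableSet_Icc] with t ht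
        rw [Real.norm_eq_abs, abs_of_nonneg (mul_nonneg (hGnn t) (hμnn t))]
        exact mul_le_mul_of_nonneg_right (hGbd t ht.1) (hμnn t)
    · -- on [B1, ∞) : G t * μ t ≤ β*C * t ^ (-1-ε)
      have hint : IntegrableOn (fun t : ℝ => (β * C) * t ^ (-1 - ε)) (Set.Ici B1) := by
        rw [integrableOn_Ici_iff_integrableOn_Ioi]
        exact (integrableOn_Ioi_rpow_of_lt (by linarith) hB1).const_mul _
      apply Integrable.mono' hint
      · exact ((hGmeas.mul hμmeas).aestronglyMeasurable).restrict
      · filter_upwards [ae_restrict_mem measurableSet_Ici] with t ht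
        have ht0 : (0:ℝ) < t := lt_of_lt_of_le hB1 ht
        rw [Real.norm_eq_abs, abs_of_nonneg (mul_nonneg (hGnn t) (hμnn t))]
        calc G t * μ t ≤ (β * t ^ (-α)) * (C * t ^ (α - 1 - ε)) := by
              apply mul_le_mul (hGdecay t ht) (hμbound t ht) (hμnn t)
              positivity
          _ = (β * C) * (t ^ (-α) * t ^ (α - 1 - ε)) := by ring
          _ = (β * C) * t ^ (-1 - ε) := by
              rw [← Real.rpow_add ht0]
              ring_nf
  -- Step 2: the dominating function on the product
  have hF : IntegrableOn
      (fun p : ℝ × ℝ => (s * P) * ((G p.1 * μ p.1) * (p.2 * q p.2)))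
      (Set.Ici 0 ×ˢ Set.Ici 0) := by
    rw [IntegrableOn, Measure.volume_eq_prod, ← Measure.prod_restrict]
    exact (hGμ.mul_prod hmH).const_mul _
  -- Step 3: conclude by domination
  apply Integrable.mono' hF
  · apply Measurable.aestronglyMeasurable
    apply Measurable.mul
    apply Measurable.mul
    · exact (measurable_const.sub (((measurable_const.mul measurable_snd).mul
        (hGmeas.comp measurable_fst)).neg.exp))
    · exact hμmeas.comp measurable_fst
    · exact hqmeas.comp measurable_snd
  · rw [Measure.volume_eq_prod, ← Measure.prod_restrict]
    have hmeas : MeasurableSet (Set.Ici (0:ℝ) ×ˢ Set.Ici (0:ℝ)) :=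
      measurableSet_Ici.prod measurableSet_Ici
    rw [Measure.prod_restrict]
    filter_upwards [ae_restrict_mem hmeas] with p hp
    obtain ⟨ht, hh⟩ := hp
    set x := s * P * p.2 * G p.1 with hx
    have hx0 : 0 ≤ x := by
      apply mul_nonneg (mul_nonneg (mul_nonneg hs hP.le) hh) (hGnn p.1)
    have h1 : 0 ≤ 1 - Real.exp (-x) := by
      have := Real.exp_le_one_iff.mpr (neg_nonpos.mpr hx0)
      linarith
    have h2 : 1 - Real.exp (-x) ≤ x := by
      have := Real.add_one_le_exp (-x)
      linarith
    rw [Real.norm_eq_abs, abs_of_nonneg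
      (mul_nonneg (mul_nonneg h1 (hμnn p.1)) (hqnn p.2))]
    calc (1 - Real.exp (-x)) * μ p.1 * q p.2
        ≤ x * μ p.1 * q p.2 := by
          apply mul_le_mul_of_nonneg_right _ (hqnn p.2)
          exact mul_le_mul_of_nonneg_right h2 (hμnn p.1)
      _ = (s * P) * ((G p.1 * μ p.1) * (p.2 * q p.2)) := by rw [hx]; ring
end

section
/- With notation as in the triangular-array construction, Var(I_n) = ⌈Λ_n⌉ σ_{1,n}², where σ_{1,n}² = (λ P² m_{H²}/Λ_n) ∫₀^n G²(t) μ(t) dt − (λ² P² m_H² / Λ_n²)(∫₀^n G(t) μ(t) dt)², and lim_{n→∞} Var(I_n) = λ P² m_{H²} ∫₀^∞ G²(t) μ(t) dt, provided Λ_n → ∞ and ∫₀^∞ G(t) μ(t) dt, ∫₀^∞ G²(t) μ(t) dt < ∞. -/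
/-!
Within each summand `Hᵢ G(Uₙᵢ)` of `Iₙ` the two factors are independent, so its variance is
`E[H²] E[G(U)²] - (E[H] E[G(U)])²`; distinct summands are functions of disjoint parts of an
independent family, so the variances add. The density formulas give the moments, and also the
integrability, hence a.e. measurability, of `H` and `G ∘ U`. In the limit `⌈Λₙ⌉/Λₙ → 1` while
`⌈Λₙ⌉/Λₙ² → 0`, and the integrals over `[0, n]` converge to those over `[0, ∞)`.
-/

open MeasureTheory ProbabilityTheory Filter Topology

lemma integrable_max_zero_mul {α : Type*} [MeasurableSpace α] {ν : Measure α} {g f : α → ℝ}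
    (hg : Measurable g) (hgf : Integrable (fun x => g x * f x) ν) :
    Integrable (fun x => max (g x) 0 * f x) ν := by
  have h : (fun x => max (g x) 0 * f x) = {x | 0 ≤ g x}.indicator (fun x => g x * f x) := by
    ext x
    by_cases hx : 0 ≤ g x
    · simp [hx]
    · simp [hx, (not_le.1 hx).le]
  rw [h]
  exact hgf.indicator (measurableSet_le measurable_const hg)

section Density

variable {Ω : Type*} [MeasurableSpace Ω] {P : Measure Ω} {X : Ω → ℝ} {ν : Measure ℝ}
  {f g : ℝ → ℝ}

def HasDensity (X : Ω → ℝ) (P : Measure Ω) (f : ℝ → ℝ) (ν : Measure ℝ) : Prop :=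
  ∀ g : ℝ → ℝ, Measurable g → (∀ x, 0 ≤ g x) → ∫ ω, g (X ω) ∂P = ∫ x, g x * f x ∂ν

lemma HasDensity.of_integral_eq_const_mul {c : ℝ}
    (h : ∀ g : ℝ → ℝ, Measurable g → (∀ x, 0 ≤ g x) →
      ∫ ω, g (X ω) ∂P = c * ∫ x, g x * f x ∂ν) :
    HasDensity X P (fun x => f x * c) ν := fun g hg hg₀ => by
  rw [h g hg hg₀, ← integral_const_mul]
  congr 1 with x
  ring

namespace HasDensity

variable [IsProbabilityMeasure P]

lemma integral_eq_one (h : HasDensity X P f ν) : ∫ x, f x ∂ν = 1 := by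
  simpa using (h (fun _ => 1) measurable_const fun _ => zero_le_one).symm

/-- `∫ (g ∘ X + 1) ≥ 1` cannot be the junk value `0` of a non-integrable function. -/
lemma integrable_comp_of_nonneg (h : HasDensity X P f ν) (hg : Measurable g)
    (hg₀ : ∀ x, 0 ≤ g x) (hgf : Integrable (fun x => g x * f x) ν) :
    Integrable (fun ω => g (X ω)) P := by
  have hf : Integrable f ν := Integrable.of_integral_ne_zero (by simp [h.integral_eq_one])
  have hgf₀ : 0 ≤ ∫ x, g x * f x ∂ν := h g hg hg₀ ▸ integral_nonneg fun ω => hg₀ (X ω)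
  have hint : ∫ ω, (g (X ω) + 1) ∂P = ∫ x, g x * f x ∂ν + 1 := by
    rw [h _ (hg.add_const 1) fun x => by linarith [hg₀ x]]
    simp only [add_mul, one_mul]
    rw [integral_add hgf hf, h.integral_eq_one]
  have hint' : Integrable (fun ω => g (X ω) + 1) P :=
    Integrable.of_integral_ne_zero (by rw [hint]; linarith)
  exact (hint'.sub (integrable_const 1)).congr (ae_of_all _ fun ω => by simp)

lemma integrable_comp_max_zero (h : HasDensity X P f ν) (hg : Measurable g)
    (hgf : Integrable (fun x => g x * f x) ν) : Integrable (fun ω => max (g (X ω)) 0) P :=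
  h.integrable_comp_of_nonneg (hg.max measurable_const) (fun _ => le_max_right _ _)
    (integrable_max_zero_mul hg hgf)

lemma integrable_comp (h : HasDensity X P f ν) (hg : Measurable g)
    (hgf : Integrable (fun x => g x * f x) ν) : Integrable (fun ω => g (X ω)) P :=
  ((h.integrable_comp_max_zero hg hgf).sub
    (h.integrable_comp_max_zero hg.neg (g := fun x => -g x) (by simpa using hgf.neg))).congr
    (ae_of_all _ fun ω => max_zero_sub_max_neg_zero_eq_self _)

lemma integral_comp (h : HasDensity X P f ν) (hg : Measurable g)
    (hgf : Integrable (fun x => g x * f x) ν) :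
    ∫ ω, g (X ω) ∂P = ∫ x, g x * f x ∂ν := by
  have hg' : Measurable fun x => -g x := hg.neg
  have hgf' : Integrable (fun x => -g x * f x) ν := by simpa using hgf.neg
  have hsplit : ∀ y : ℝ, max y 0 - max (-y) 0 = y := max_zero_sub_max_neg_zero_eq_self
  calc ∫ ω, g (X ω) ∂P = ∫ ω, (max (g (X ω)) 0 - max (-g (X ω)) 0) ∂P := by simp only [hsplit]
    _ = ∫ x, max (g x) 0 * f x ∂ν - ∫ x, max (-g x) 0 * f x ∂ν := by
      rw [integral_sub (h.integrable_comp_max_zero hg hgf) (h.integrable_comp_max_zero hg' hgf'),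
        h _ (hg.max measurable_const) (fun _ => le_max_right _ _),
        h _ (hg'.max measurable_const) (fun _ => le_max_right _ _)]
    _ = ∫ x, g x * f x ∂ν := by
      simp only [← integral_sub (integrable_max_zero_mul hg hgf) (integrable_max_zero_mul hg' hgf'),
        ← sub_mul, hsplit]

lemma memLp_two_comp (h : HasDensity X P f ν) (hg : Measurable g)
    (hgf : Integrable (fun x => g x * f x) ν) (hg₂f : Integrable (fun x => g x ^ 2 * f x) ν) :
    MemLp (fun ω => g (X ω)) 2 P :=
  (memLp_two_iff_integrable_sq (h.integrable_comp hg hgf).aestronglyMeasurable).2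
    (h.integrable_comp_of_nonneg (g := fun x => g x ^ 2) (hg.pow_const 2)
      (fun _ => sq_nonneg _) hg₂f)

end HasDensity

end Density

namespace ProbabilityTheory

variable {Ω : Type*} [MeasurableSpace Ω] {P : Measure Ω}

lemma iIndepFun.sumElim_comp_right {ι κ β : Type*} [MeasurableSpace β]
    {X : ι → Ω → β} {Y : κ → Ω → β} (h : iIndepFun (Sum.elim X Y) P) {φ : β → β}
    (hφ : Measurable φ) : iIndepFun (Sum.elim X fun i => φ ∘ Y i) P := by
  have := h.comp (fun k => Sum.elim (fun _ => id) (fun _ => φ) k)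
    (by rintro (k | k); exacts [measurable_id, hφ])
  convert this using 1
  ext (k | k) <;> rfl

lemma iIndepFun.indepFun_mul_mul_sumElim {ι : Type*} {X Y : ι → Ω → ℝ}
    (h : iIndepFun (Sum.elim X Y) P) (hX : ∀ i, AEMeasurable (X i) P)
    (hY : ∀ i, AEMeasurable (Y i) P) {i j : ι} (hij : i ≠ j) :
    IndepFun (X i * Y i) (X j * Y j) P :=
  h.indepFun_mul_mul₀ (by rintro (k | k); exacts [hX k, hY k]) (.inl i) (.inr i) (.inl j) (.inr j)
    (by simpa using hij) (by simp) (by simp) (by simpa using hij)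

lemma IndepFun.memLp_two_mul {X Y : Ω → ℝ} (h : IndepFun X Y P) (hX : MemLp X 2 P)
    (hY : MemLp Y 2 P) : MemLp (X * Y) 2 P := by
  refine (memLp_two_iff_integrable_sq (hX.aestronglyMeasurable.mul hY.aestronglyMeasurable)).2 ?_
  have hsq : IndepFun (fun ω => X ω ^ 2) (fun ω => Y ω ^ 2) P :=
    h.comp (continuous_pow 2).measurable (continuous_pow 2).measurable
  simp only [Pi.mul_apply, mul_pow]
  exact hsq.integrable_mul hX.integrable_sq hY.integrable_sq

lemma IndepFun.variance_mul [IsProbabilityMeasure P] {X Y : Ω → ℝ} (h : IndepFun X Y P)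
    (hX : MemLp X 2 P) (hY : MemLp Y 2 P) :
    variance (X * Y) P = (∫ ω, X ω ^ 2 ∂P) * (∫ ω, Y ω ^ 2 ∂P) - (P[X] * P[Y]) ^ 2 := by
  have hsq : IndepFun (fun ω => X ω ^ 2) (fun ω => Y ω ^ 2) P :=
    h.comp (continuous_pow 2).measurable (continuous_pow 2).measurable
  rw [variance_eq_sub (h.memLp_two_mul hX hY), h.integral_mul_eq_mul_integral
    hX.aestronglyMeasurable hY.aestronglyMeasurable, ← hsq.integral_fun_mul_eq_mul_integral
    (hX.aestronglyMeasurable.pow 2) (hY.aestronglyMeasurable.pow 2)]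
  simp only [Pi.pow_apply, Pi.mul_apply, mul_pow]

theorem variance_sum_mul_of_iIndepFun [IsProbabilityMeasure P] {ι : Type*}
    {X Y : ι → Ω → ℝ} (h : iIndepFun (Sum.elim X Y) P) (hX : ∀ i, MemLp (X i) 2 P)
    (hY : ∀ i, MemLp (Y i) 2 P) {a a₂ b b₂ : ℝ} (ha : ∀ i, P[X i] = a)
    (ha₂ : ∀ i, ∫ ω, X i ω ^ 2 ∂P = a₂) (hb : ∀ i, P[Y i] = b)
    (hb₂ : ∀ i, ∫ ω, Y i ω ^ 2 ∂P = b₂) (s : Finset ι) :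
    variance (∑ i ∈ s, X i * Y i) P = s.card * (a₂ * b₂ - (a * b) ^ 2) := by
  have hXY : ∀ i, IndepFun (X i) (Y i) P := fun i => h.indepFun (i := .inl i) (j := .inr i) (by simp)
  rw [IndepFun.variance_sum (fun i _ => (hXY i).memLp_two_mul (hX i) (hY i))
    fun i _ j _ hij => h.indepFun_mul_mul_sumElim (fun k => (hX k).aemeasurable)
      (fun k => (hY k).aemeasurable) hij]
  simp only [fun i => (hXY i).variance_mul (hX i) (hY i), ha, ha₂, hb, hb₂, Finset.sum_const,
    nsmul_eq_mul]

end ProbabilityTheory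

lemma tendsto_setIntegral_Icc_natCast {f : ℝ → ℝ} {a : ℝ} (hf : IntegrableOn f (Set.Ici a)) :
    Tendsto (fun n : ℕ => ∫ t in Set.Icc a n, f t) atTop (𝓝 (∫ t in Set.Ici a, f t)) := by
  rw [integral_Ici_eq_integral_Ioi]
  refine (intervalIntegral_tendsto_integral_Ioi a (hf.mono_set Set.Ioi_subset_Ici_self)
    tendsto_natCast_atTop_atTop).congr' ?_
  filter_upwards [tendsto_natCast_atTop_atTop.eventually_ge_atTop a] with n hn
  rw [intervalIntegral.integral_of_le hn, integral_Icc_eq_integral_Ioc]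

lemma tendsto_natCeil_mul_div_sub_div_sq {ι : Type*} {l : Filter ι} {Λ A B : ι → ℝ}
    {a b A₀ B₀ : ℝ} (hΛ : Tendsto Λ l atTop) (hA : Tendsto A l (𝓝 A₀)) (hB : Tendsto B l (𝓝 B₀)) :
    Tendsto (fun n => (⌈Λ n⌉₊ : ℝ) * (a / Λ n * A n - b / Λ n ^ 2 * B n ^ 2)) l (𝓝 (a * A₀)) := by
  have hceil : Tendsto (fun n => (⌈Λ n⌉₊ : ℝ) / Λ n) l (𝓝 1) :=
    tendsto_nat_ceil_div_atTop.comp hΛ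
  have hlim := ((hceil.mul hA).const_mul a).sub
    (((hceil.mul hΛ.inv_tendsto_atTop).mul (hB.pow 2)).const_mul b)
  rw [one_mul, mul_zero, zero_mul, mul_zero, sub_zero] at hlim
  refine hlim.congr fun n => ?_
  rw [Pi.inv_apply]
  ring

theorem stmt13_general {Ω : Type*} [MeasureSpace Ω] [IsProbabilityMeasure (volume : Measure Ω)]
    (U : ℕ → ℕ → Ω → ℝ) (H : ℕ → Ω → ℝ) (lam P mH mH2 : ℝ) (μ q G : ℝ → ℝ)
    (hGmeas : Measurable G) (hGnn : ∀ t, 0 ≤ G t)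
    (Λ : ℕ → ℝ) (hΛtop : Tendsto Λ atTop atTop)
    (hUdens : ∀ n i, ∀ g : ℝ → ℝ, Measurable g → (∀ x, 0 ≤ g x) →
      ∫ ω, g (U n i ω) = (lam / Λ n) * ∫ t in Set.Icc (0 : ℝ) (n : ℝ), g t * μ t)
    (hHdens : ∀ i, ∀ g : ℝ → ℝ, Measurable g → (∀ x, 0 ≤ g x) →
      ∫ ω, g (H i ω) = ∫ h in Set.Ici (0 : ℝ), g h * q h)
    (hmH : mH = ∫ h in Set.Ici (0 : ℝ), h * q h)
    (hmH2 : mH2 = ∫ h in Set.Ici (0 : ℝ), h ^ 2 * q h)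
    (hmHint : IntegrableOn (fun h => h * q h) (Set.Ici 0))
    (hmH2int : IntegrableOn (fun h => h ^ 2 * q h) (Set.Ici 0))
    (hindep : ∀ n, iIndepFun (Sum.elim H (U n)) volume)
    (In : ℕ → Ω → ℝ)
    (hIn : ∀ n ω, In n ω = P * ∑ i ∈ Finset.range ⌈Λ n⌉₊, H i ω * G (U n i ω))
    (hGμ : IntegrableOn (fun t => G t * μ t) (Set.Ici 0))
    (hG2μ : IntegrableOn (fun t => (G t) ^ 2 * μ t) (Set.Ici 0)) :
    (∀ n, variance (In n) volume
        = (⌈Λ n⌉₊ : ℝ) *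
            ((lam * P ^ 2 * mH2 / Λ n) * (∫ t in Set.Icc (0 : ℝ) (n : ℝ), (G t) ^ 2 * μ t)
              - (lam ^ 2 * P ^ 2 * mH ^ 2 / (Λ n) ^ 2)
                  * (∫ t in Set.Icc (0 : ℝ) (n : ℝ), G t * μ t) ^ 2)) ∧
      Tendsto (fun n => variance (In n) volume) atTop
        (nhds (lam * P ^ 2 * mH2 * ∫ t in Set.Ici (0 : ℝ), (G t) ^ 2 * μ t)) := by
  refine (and_iff_left_of_imp fun hvar => ?_).2 fun n => ?_
  · simp_rw [hvar]
    exact tendsto_natCeil_mul_div_sub_div_sq hΛtop (tendsto_setIntegral_Icc_natCast hG2μ)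
      (tendsto_setIntegral_Icc_natCast hGμ)
  have hH : ∀ i, HasDensity (H i) volume q (volume.restrict (Set.Ici 0)) := hHdens
  have hU i := HasDensity.of_integral_eq_const_mul (hUdens n i)
  have hUint (φ : ℝ → ℝ) (hφ : IntegrableOn (fun t => φ t * μ t) (Set.Ici 0)) :
      Integrable (fun t => φ t * (μ t * (lam / Λ n))) (volume.restrict (Set.Icc 0 n)) := by
    simpa only [mul_assoc] using (hφ.mono_set Set.Icc_subset_Ici_self).mul_const (lam / Λ n)
  have hIn' : In n = fun ω => P * (∑ i ∈ Finset.range ⌈Λ n⌉₊, H i * G ∘ U n i) ω := by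
    ext ω; simp [hIn, Finset.sum_apply]
  rw [hIn', variance_const_mul, variance_sum_mul_of_iIndepFun
    ((hindep n).sumElim_comp_right hGmeas)
    (fun i => (hH i).memLp_two_comp measurable_id hmHint hmH2int)
    (fun i => (hU i).memLp_two_comp hGmeas (hUint G hGμ) (hUint (fun t => G t ^ 2) hG2μ))
    (fun i => ((hH i).integral_comp measurable_id hmHint).trans hmH.symm)
    (fun i => (hHdens i _ (continuous_pow 2).measurable fun x => sq_nonneg x).trans hmH2.symm)
    (fun i => hUdens n i G hGmeas hGnn)
    (fun i => hUdens n i (fun t => G t ^ 2) (hGmeas.pow_const 2) fun t => sq_nonneg _),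
    Finset.card_range]
  ring

/-- Lemma 7 (variance part): Var(Iₙ) = ⌈Λₙ⌉ σ₁ₙ² with
σ₁ₙ² = (λP²m_{H²}/Λₙ)∫₀ⁿ G²μ − (λ²P²m_H²/Λₙ²)(∫₀ⁿ Gμ)², and
Var(Iₙ) → λ P² m_{H²} ∫₀^∞ G² μ as n → ∞. -/
theorem stmt13 {Ω : Type*} [MeasureSpace Ω] [IsProbabilityMeasure (volume : Measure Ω)]
    (U : ℕ → ℕ → Ω → ℝ) (H : ℕ → Ω → ℝ) (lam P mH mH2 : ℝ) (μ q G : ℝ → ℝ)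
    (hlam : 0 < lam) (hP : 0 < P)
    (hμmeas : Measurable μ) (hμnn : ∀ t, 0 ≤ μ t)
    (hqmeas : Measurable q) (hqnn : ∀ h, 0 ≤ q h)
    (hGmeas : Measurable G) (hGnn : ∀ t, 0 ≤ G t) (MG : ℝ) (hGbd : ∀ t, G t ≤ MG)
    (Λ : ℕ → ℝ) (hΛ : ∀ n, Λ n = lam * ∫ t in Set.Icc (0 : ℝ) (n : ℝ), μ t)
    (hΛpos : ∀ n, 0 < Λ n) (hΛtop : Tendsto Λ atTop atTop)
    (hUdens : ∀ n i, ∀ g : ℝ → ℝ, Measurable g → (∀ x, 0 ≤ g x) →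
      ∫ ω, g (U n i ω) = (lam / Λ n) * ∫ t in Set.Icc (0 : ℝ) (n : ℝ), g t * μ t)
    (hHdens : ∀ i, ∀ g : ℝ → ℝ, Measurable g → (∀ x, 0 ≤ g x) →
      ∫ ω, g (H i ω) = ∫ h in Set.Ici (0 : ℝ), g h * q h)
    (hmH : mH = ∫ h in Set.Ici (0 : ℝ), h * q h)
    (hmH2 : mH2 = ∫ h in Set.Ici (0 : ℝ), h ^ 2 * q h)
    (hmHint : IntegrableOn (fun h => h * q h) (Set.Ici 0))
    (hmH2int : IntegrableOn (fun h => h ^ 2 * q h) (Set.Ici 0))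
    (hindep : ∀ n, iIndepFun (Sum.elim H (U n)) volume)
    (In : ℕ → Ω → ℝ)
    (hIn : ∀ n ω, In n ω = P * ∑ i ∈ Finset.range ⌈Λ n⌉₊, H i ω * G (U n i ω))
    (hGμ : IntegrableOn (fun t => G t * μ t) (Set.Ici 0))
    (hG2μ : IntegrableOn (fun t => (G t) ^ 2 * μ t) (Set.Ici 0)) :
    (∀ n, variance (In n) volume
        = (⌈Λ n⌉₊ : ℝ) *
            ((lam * P ^ 2 * mH2 / Λ n) * (∫ t in Set.Icc (0 : ℝ) (n : ℝ), (G t) ^ 2 * μ t)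
              - (lam ^ 2 * P ^ 2 * mH ^ 2 / (Λ n) ^ 2)
                  * (∫ t in Set.Icc (0 : ℝ) (n : ℝ), G t * μ t) ^ 2)) ∧
      Tendsto (fun n => variance (In n) volume) atTop
        (nhds (lam * P ^ 2 * mH2 * ∫ t in Set.Ici (0 : ℝ), (G t) ^ 2 * μ t)) :=
  stmt13_general U H lam P mH mH2 μ q G hGmeas hGnn Λ hΛtop hUdens hHdens hmH hmH2 hmHint hmH2int
    hindep In hIn hGμ hG2μ
end
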